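/- Let B be a strict 2-category and let α and β be two contractions on B with the same center c. For every object x of B, the 2-cells α_{β_x} : β_x ⟶ α_x (obtained by applying α to the 1-cell β_x : x ⟶ c, using α_c = 𝟙 c and strictness) and β_{α_x} : α_x ⟶ β_x are mutually inverse: β_{α_x} ≫ α_{β_x} = 𝟙 (α_x) and α_{β_x} ≫ β_{α_x} = 𝟙 (β_x). In particular α_x and β_x are isomorphic objects of the hom-category B(x, c). -/

import Mathlib

open CategoryTheory CategoryTheory.Limits

universe w v u

/-- A contraction on a strict 2-category `B` with center `c`. -/
structure Contraction (B : Type u) [Bicategory.{w, v} B] [Bicategory.Strict B] (c : B) where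
  obj : ∀ a : B, a ⟶ c
  obj_center : obj c = 𝟙 c
  app : ∀ {a b : B} (f : a ⟶ b), f ≫ obj b ⟶ obj a
  app_id : ∀ a : B, app (𝟙 a) = eqToHom (by simp)
  app_comp : ∀ {a b b' : B} (f : a ⟶ b) (g : b ⟶ b'),
    app (f ≫ g) = eqToHom (by simp) ≫ Bicategory.whiskerLeft f (app g) ≫ app f
  app_naturality : ∀ {a b : B} {f g : a ⟶ b} (θ : f ⟶ g),
    app f = Bicategory.whiskerRight θ (obj b) ≫ app g
  app_norm : ∀ a : B, app (obj a) = eqToHom (by rw [obj_center]; simp)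


/-- For a 1-cell `h : x ⟶ c`, the 2-cell `γ_h : h ⟶ γ_x` obtained from `γ.app h`
using `γ.obj c = 𝟙 c` and strictness. -/
def Contraction.app' {B : Type u} [Bicategory.{w, v} B] [Bicategory.Strict B] {c : B}
    (γ : Contraction B c) {x : B} (h : x ⟶ c) : h ⟶ γ.obj x :=
  eqToHom (by rw [γ.obj_center]; simp) ≫ γ.app h

/-! Applying the 2-cell law of `α` to the 2-cell `β_{α_x} : α_x ⟶ β_x` gives
`β_{α_x} ≫ α_{β_x} = α_{α_x}`, and the right-hand side is the identity by normality of `α`;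
the other composite is the same argument with `α` and `β` exchanged. -/

namespace Contraction

variable {B : Type u} [Bicategory.{w, v} B] [Bicategory.Strict B] {c : B}

lemma app'_naturality (γ : Contraction B c) {x : B} {f g : x ⟶ c} (θ : f ⟶ g) :
    θ ≫ γ.app' g = γ.app' f := by
  -- `γ.obj c` is not a variable, so abstract it to substitute `γ.obj_center`.
  have key : ∀ (k : c ⟶ c) (hk : k = 𝟙 c) (φ : f ≫ k ⟶ γ.obj x) (ψ : g ≫ k ⟶ γ.obj x),
      φ = Bicategory.whiskerRight θ k ≫ ψ →
      θ ≫ eqToHom (by rw [hk]; simp) ≫ ψ = eqToHom (by rw [hk]; simp) ≫ φ := by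
    rintro k rfl φ ψ rfl
    simp [Bicategory.whiskerRight_id, Bicategory.Strict.rightUnitor_eqToIso]
  exact key _ γ.obj_center _ _ (γ.app_naturality θ)

@[simp]
lemma app'_obj (γ : Contraction B c) (x : B) : γ.app' (γ.obj x) = 𝟙 (γ.obj x) := by
  simp [app', γ.app_norm]

lemma app'_comp_app' (α β : Contraction B c) (x : B) :
    β.app' (α.obj x) ≫ α.app' (β.obj x) = 𝟙 (α.obj x) := by
  rw [α.app'_naturality, α.app'_obj]

def objIso (α β : Contraction B c) (x : B) : α.obj x ≅ β.obj x where
  hom := β.app' (α.obj x)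
  inv := α.app' (β.obj x)
  hom_inv_id := app'_comp_app' α β x
  inv_hom_id := app'_comp_app' β α x

end Contraction

/-- Two contractions `α`, `β` with the same center are essentially unique: the
2-cells `α_{β_x} : β_x ⟶ α_x` and `β_{α_x} : α_x ⟶ β_x` are mutually inverse,
so `α_x ≅ β_x` in `B(x, c)`. -/
theorem contractions_essentially_unique {B : Type u} [Bicategory.{w, v} B]
    [Bicategory.Strict B] {c : B} (α β : Contraction B c) (x : B) :
    β.app' (α.obj x) ≫ α.app' (β.obj x) = 𝟙 (α.obj x) ∧
      α.app' (β.obj x) ≫ β.app' (α.obj x) = 𝟙 (β.obj x) ∧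
      Nonempty (α.obj x ≅ β.obj x) := by
  exact ⟨Contraction.app'_comp_app' α β x, Contraction.app'_comp_app' β α x,
    ⟨Contraction.objIso α β x⟩⟩
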